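/- Let b > 0 and let s < t with t − s ≥ 1. Let γ : [s,t] → ℝ^d be a continuously differentiable curve with |γ(s)| ≤ b and γ(t) = x, which minimizes A^W_{s,t} among all absolutely continuous curves with the same endpoints and which satisfies, for every u ∈ [s,t], the Euler–Lagrange identity γ̇(t) = γ̇(u) + ∫_u^t ∇²F(γ(τ)) γ̇(τ) (W(τ) − W(t)) dτ + ∇F(γ(u))·(W(u) − W(t)). Then there is a constant c > 0, depending only on b, C₀, C₁ and C₂ (and not on x, s, t, W), such that |γ̇(t)| ≤ c·(t − s)·( 1 + |x|² + max_{s ≤ τ ≤ t} |W(τ) − W(t)|² ). -/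

import Mathlib

open MeasureTheory Set Real RealInnerProductSpace

/-- `γ : [s,t] → ℝ^d` is absolutely continuous with (integrable) derivative `γ'`:
`γ τ = γ s + ∫_s^τ γ' u du` for all `τ ∈ [s,t]`. -/
def IsACWith {d : ℕ} (γ γ' : ℝ → EuclideanSpace ℝ (Fin d)) (s t : ℝ) : Prop :=
  IntervalIntegrable γ' volume s t ∧
    ∀ τ ∈ Set.Icc s t, γ τ = γ s + ∫ u in s..τ, γ' u

/-- The action `A^{W}_{s,t}(γ) = ∫_s^t ((1/2)|γ̇|² + ∇F(γ)·γ̇ (W(τ) - W(t))) dτ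
+ F(γ(s)) (W(s) - W(t))`, expressed via the pair `(γ, γ')`. -/
noncomputable def actionW {d : ℕ} (F : EuclideanSpace ℝ (Fin d) → ℝ) (W : ℝ → ℝ)
    (γ γ' : ℝ → EuclideanSpace ℝ (Fin d)) (s t : ℝ) : ℝ :=
  (∫ τ in s..t, ((1/2) * ‖γ' τ‖^2 + ⟪gradient F (γ τ), γ' τ⟫ * (W τ - W t)))
    + F (γ s) * (W s - W t)

/-- `max_{s ≤ τ ≤ t} |W(τ) - W(t)|`. -/
noncomputable def maxW (W : ℝ → ℝ) (s t : ℝ) : ℝ :=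
  sSup ((fun τ => |W τ - W t|) '' Set.Icc s t)

/-!
Comparing `γ` with the straight segment between its endpoints bounds the kinetic energy
`∫ ‖γ'‖²` by `‖x‖`, `b` and `max |W - W t|`, since the potential terms of the action are at most
linear in `‖γ'‖` and are absorbed by Young's inequality. The velocity somewhere on `[s,t]` equals
the mean speed, and the Euler–Lagrange identity transports this to `t` at the cost of
`C₂ · max |W - W t| · ∫ ‖γ'‖ + C₁ · max |W - W t|`, which Young's inequality again controls by
the energy and `t - s`.
-/

lemma abs_sub_le_maxW {W : ℝ → ℝ} {s t τ : ℝ} (hW : ContinuousOn W (Icc s t))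
    (hτ : τ ∈ Icc s t) : |W τ - W t| ≤ maxW W s t :=
  le_csSup (isCompact_Icc.image_of_continuousOn (hW.sub continuousOn_const).abs).bddAbove
    ⟨τ, hτ, rfl⟩

lemma maxW_nonneg {W : ℝ → ℝ} {s t : ℝ} (hW : ContinuousOn W (Icc s t)) (hst : s ≤ t) :
    0 ≤ maxW W s t :=
  (abs_nonneg _).trans (abs_sub_le_maxW hW (right_mem_Icc.2 hst))

lemma ContDiff.gradient {E : Type*} [NormedAddCommGroup E] [InnerProductSpace ℝ E]
    [CompleteSpace E] {F : E → ℝ} {n : WithTop ℕ∞} (hF : ContDiff ℝ (n + 1) F) :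
    ContDiff ℝ n (gradient F) :=
  (InnerProductSpace.toDual ℝ E).symm.contDiff.comp (hF.fderiv_right le_rfl)

lemma abs_inner_mul_le {E : Type*} [NormedAddCommGroup E] [InnerProductSpace ℝ E]
    {g w : E} {a C M : ℝ} (hg : ‖g‖ ≤ C) (ha : |a| ≤ M) : |⟪g, w⟫ * a| ≤ C * ‖w‖ * M := by
  rw [abs_mul]
  exact mul_le_mul ((abs_real_inner_le_norm g w).trans (by gcongr)) ha (abs_nonneg a)
    (mul_nonneg ((norm_nonneg g).trans hg) (norm_nonneg w))

lemma abs_mul_le_of_abs_le {y a C M : ℝ} (hy : |y| ≤ C) (ha : |a| ≤ M) : |y * a| ≤ C * M := by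
  rw [abs_mul]
  exact mul_le_mul hy ha (abs_nonneg a) ((abs_nonneg y).trans hy)

lemma mul_integral_le_integral_sq_add {f : ℝ → ℝ} {s t : ℝ} (hst : s ≤ t)
    (hf : IntervalIntegrable f volume s t) (hf2 : IntervalIntegrable (fun τ => f τ ^ 2) volume s t)
    (a : ℝ) : a * ∫ τ in s..t, f τ ≤ (1/4) * (∫ τ in s..t, f τ ^ 2) + a ^ 2 * (t - s) := by
  have young : ∀ τ ∈ Icc s t, a * f τ ≤ (1/4) * f τ ^ 2 + a ^ 2 := fun τ _ => by
    nlinarith [sq_nonneg (f τ - 2 * a)]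
  calc a * ∫ τ in s..t, f τ = ∫ τ in s..t, a * f τ := (intervalIntegral.integral_const_mul _ _).symm
    _ ≤ ∫ τ in s..t, ((1/4) * f τ ^ 2 + a ^ 2) :=
      intervalIntegral.integral_mono_on hst (hf.const_mul a)
        ((hf2.const_mul _).add intervalIntegrable_const) young
    _ = (1/4) * (∫ τ in s..t, f τ ^ 2) + a ^ 2 * (t - s) := by
      rw [intervalIntegral.integral_add (hf2.const_mul _) intervalIntegrable_const,
        intervalIntegral.integral_const_mul, intervalIntegral.integral_const, smul_eq_mul]
      ring

section Action

variable {d : ℕ} {F : EuclideanSpace ℝ (Fin d) → ℝ} {W : ℝ → ℝ}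
  {γ γ' : ℝ → EuclideanSpace ℝ (Fin d)} {s t C₀ C₁ C₂ : ℝ}

def IsActionMinimizer (F : EuclideanSpace ℝ (Fin d) → ℝ) (W : ℝ → ℝ)
    (γ γ' : ℝ → EuclideanSpace ℝ (Fin d)) (s t : ℝ) : Prop :=
  ∀ σ σ' : ℝ → EuclideanSpace ℝ (Fin d), IsACWith σ σ' s t →
    σ s = γ s → σ t = γ t → actionW F W γ γ' s t ≤ actionW F W σ σ' s t

lemma IsACWith.continuousOn (h : IsACWith γ γ' s t) (hst : s ≤ t) :
    ContinuousOn γ (Icc s t) := by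
  have hprim := intervalIntegral.continuousOn_primitive_interval' h.1 left_mem_uIcc
  rw [uIcc_of_le hst] at hprim
  exact (continuousOn_const.add hprim).congr h.2

lemma isACWith_affine (p v : EuclideanSpace ℝ (Fin d)) (s t : ℝ) :
    IsACWith (fun τ => p + (τ - s) • v) (fun _ => v) s t :=
  ⟨intervalIntegrable_const, fun τ _ => by simp [intervalIntegral.integral_const]⟩

lemma le_actionW (hst : s ≤ t) (hW : ContinuousOn W (Icc s t)) (hF₀ : ∀ y, |F y| ≤ C₀)
    (hF₁ : ∀ y, ‖gradient F y‖ ≤ C₁) (hgrad : Continuous (gradient F))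
    (hγ : ContinuousOn γ (Icc s t)) (hγ' : ContinuousOn γ' (Icc s t)) :
    (1/4) * (∫ τ in s..t, ‖γ' τ‖ ^ 2) - C₁ ^ 2 * maxW W s t ^ 2 * (t - s) - C₀ * maxW W s t
      ≤ actionW F W γ γ' s t := by
  set M := maxW W s t
  have hE : IntervalIntegrable (fun τ => ‖γ' τ‖ ^ 2) volume s t :=
    (hγ'.norm.pow 2).intervalIntegrable_of_Icc hst
  have hL : IntervalIntegrable (fun τ => (1/2) * ‖γ' τ‖ ^ 2
      + ⟪gradient F (γ τ), γ' τ⟫ * (W τ - W t)) volume s t :=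
    ((continuousOn_const.mul (hγ'.norm.pow 2)).add (((hgrad.comp_continuousOn hγ).inner hγ').mul
      (hW.sub continuousOn_const))).intervalIntegrable_of_Icc hst
  have lagrangian : ∀ τ ∈ Icc s t, (1/4) * ‖γ' τ‖ ^ 2 - C₁ ^ 2 * M ^ 2
      ≤ (1/2) * ‖γ' τ‖ ^ 2 + ⟪gradient F (γ τ), γ' τ⟫ * (W τ - W t) := fun τ hτ => by
    have h := abs_inner_mul_le (w := γ' τ) (hF₁ (γ τ)) (abs_sub_le_maxW hW hτ)
    nlinarith [neg_abs_le (⟪gradient F (γ τ), γ' τ⟫ * (W τ - W t)),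
      sq_nonneg (‖γ' τ‖ - 2 * C₁ * M)]
  have hkinetic := intervalIntegral.integral_mono_on hst
    ((hE.const_mul _).sub intervalIntegrable_const) hL lagrangian
  rw [intervalIntegral.integral_sub (hE.const_mul _) intervalIntegrable_const,
    intervalIntegral.integral_const_mul, intervalIntegral.integral_const, smul_eq_mul] at hkinetic
  have hboundary := neg_le_of_abs_le
    (abs_mul_le_of_abs_le (hF₀ (γ s)) (abs_sub_le_maxW hW (left_mem_Icc.2 hst)))
  rw [actionW]
  linarith

lemma actionW_affine_le (hst : s ≤ t) (hW : ContinuousOn W (Icc s t)) (hF₀ : ∀ y, |F y| ≤ C₀)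
    (hF₁ : ∀ y, ‖gradient F y‖ ≤ C₁) (hgrad : Continuous (gradient F))
    (p v : EuclideanSpace ℝ (Fin d)) :
    actionW F W (fun τ => p + (τ - s) • v) (fun _ => v) s t
      ≤ (t - s) * ((1/2) * ‖v‖ ^ 2 + C₁ * ‖v‖ * maxW W s t) + C₀ * maxW W s t := by
  have hL : IntervalIntegrable (fun τ => (1/2) * ‖v‖ ^ 2
      + ⟪gradient F (p + (τ - s) • v), v⟫ * (W τ - W t)) volume s t :=
    (continuousOn_const.add (((hgrad.comp (by fun_prop)).continuousOn.inner continuousOn_const).mul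
      (hW.sub continuousOn_const))).intervalIntegrable_of_Icc hst
  have hpotential := intervalIntegral.integral_mono_on hst hL intervalIntegrable_const
    fun τ hτ => add_le_add_right (le_of_abs_le
      (abs_inner_mul_le (w := v) (hF₁ _) (abs_sub_le_maxW hW hτ))) ((1/2) * ‖v‖ ^ 2)
  rw [intervalIntegral.integral_const, smul_eq_mul] at hpotential
  have hboundary := le_of_abs_le
    (abs_mul_le_of_abs_le (hF₀ p) (abs_sub_le_maxW hW (left_mem_Icc.2 hst)))
  simp only [actionW, sub_self, zero_smul, add_zero]
  linarith

lemma IsActionMinimizer.energy_le (hmin : IsActionMinimizer F W γ γ' s t) (hst : s < t)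
    (hW : ContinuousOn W (Icc s t)) (hF₀ : ∀ y, |F y| ≤ C₀) (hF₁ : ∀ y, ‖gradient F y‖ ≤ C₁)
    (hgrad : Continuous (gradient F)) (hγ : ContinuousOn γ (Icc s t))
    (hγ' : ContinuousOn γ' (Icc s t)) :
    (1/4) * (∫ τ in s..t, ‖γ' τ‖ ^ 2) ≤ ‖γ t - γ s‖ ^ 2 / (2 * (t - s))
      + C₁ * maxW W s t * ‖γ t - γ s‖ + 2 * C₀ * maxW W s t
      + C₁ ^ 2 * maxW W s t ^ 2 * (t - s) := by
  have hT : 0 < t - s := sub_pos.2 hst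
  set v := (t - s)⁻¹ • (γ t - γ s)
  have hv : ‖v‖ = ‖γ t - γ s‖ / (t - s) := by
    rw [norm_smul, norm_inv, Real.norm_of_nonneg hT.le, inv_mul_eq_div]
  have hend : γ s + (t - s) • v = γ t := by
    rw [smul_smul, mul_inv_cancel₀ hT.ne', one_smul, add_sub_cancel]
  have hcompare := (hmin _ _ (isACWith_affine (γ s) v s t) (by simp) hend).trans
    (actionW_affine_le hst.le hW hF₀ hF₁ hgrad (γ s) v)
  have hsegment : (t - s) * ((1/2) * ‖v‖ ^ 2 + C₁ * ‖v‖ * maxW W s t)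
      = ‖γ t - γ s‖ ^ 2 / (2 * (t - s)) + C₁ * maxW W s t * ‖γ t - γ s‖ := by
    rw [hv]; field_simp
  linarith [le_actionW hst.le hW hF₀ hF₁ hgrad hγ hγ']

lemma norm_le_of_eulerLagrange {u : ℝ} (hu : u ∈ Icc s t) (hW : ContinuousOn W (Icc s t))
    (hF₁ : ∀ y, ‖gradient F y‖ ≤ C₁) (hF₂ : ∀ y, ‖fderiv ℝ (gradient F) y‖ ≤ C₂)
    (hspeed : IntervalIntegrable (fun τ => ‖γ' τ‖) volume s t)
    (hEL : γ' t = γ' u + (∫ τ in u..t, (W τ - W t) • fderiv ℝ (gradient F) (γ τ) (γ' τ))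
      + (W u - W t) • gradient F (γ u)) :
    ‖γ' t‖ ≤ ‖γ' u‖ + C₂ * maxW W s t * (∫ τ in s..t, ‖γ' τ‖) + C₁ * maxW W s t := by
  set M := maxW W s t
  have hM : 0 ≤ M := maxW_nonneg hW (hu.1.trans hu.2)
  have hC₂ : 0 ≤ C₂ := (norm_nonneg _).trans (hF₂ 0)
  have hforce : ‖∫ τ in u..t, (W τ - W t) • fderiv ℝ (gradient F) (γ τ) (γ' τ)‖
      ≤ ∫ τ in u..t, C₂ * M * ‖γ' τ‖ := by
    refine intervalIntegral.norm_integral_le_of_norm_le hu.2 (Filter.Eventually.of_forall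
      fun τ hτ => ?_) ((hspeed.mono_set ?_).const_mul _)
    · rw [norm_smul, Real.norm_eq_abs, mul_comm C₂, mul_assoc]
      exact mul_le_mul (abs_sub_le_maxW hW ⟨hu.1.trans hτ.1.le, hτ.2⟩)
        (((fderiv ℝ (gradient F) (γ τ)).le_opNorm _).trans (by gcongr; exact hF₂ _))
        (norm_nonneg _) hM
    · rw [uIcc_of_le hu.2, uIcc_of_le (hu.1.trans hu.2)]
      exact Icc_subset_Icc_left hu.1
  have hsub : ∫ τ in u..t, C₂ * M * ‖γ' τ‖ ≤ ∫ τ in s..t, C₂ * M * ‖γ' τ‖ :=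
    intervalIntegral.integral_mono_interval hu.1 hu.2 le_rfl
      (Filter.Eventually.of_forall fun τ => by simp only [Pi.zero_apply]; positivity) (hspeed.const_mul _)
  have hboundary : ‖(W u - W t) • gradient F (γ u)‖ ≤ C₁ * M := by
    rw [norm_smul, Real.norm_eq_abs, mul_comm C₁]
    exact mul_le_mul (abs_sub_le_maxW hW hu) (hF₁ _) (norm_nonneg _) hM
  simp only [intervalIntegral.integral_const_mul] at hforce hsub
  rw [hEL]
  refine norm_add₃_le.trans ?_
  linarith

lemma norm_le_energy_of_eulerLagrange (hT : 1 ≤ t - s) (hW : ContinuousOn W (Icc s t))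
    (hF₁ : ∀ y, ‖gradient F y‖ ≤ C₁) (hF₂ : ∀ y, ‖fderiv ℝ (gradient F) y‖ ≤ C₂)
    (hγ' : ContinuousOn γ' (Icc s t))
    (hEL : ∀ u ∈ Icc s t,
      γ' t = γ' u + (∫ τ in u..t, (W τ - W t) • fderiv ℝ (gradient F) (γ τ) (γ' τ))
        + (W u - W t) • gradient F (γ u)) :
    ‖γ' t‖ ≤ (1/4) * (∫ τ in s..t, ‖γ' τ‖ ^ 2) + (1 + C₂ * maxW W s t) ^ 2 * (t - s)
      + C₁ * maxW W s t := by
  have hst : s < t := by linarith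
  have hspeed : IntervalIntegrable (fun τ => ‖γ' τ‖) volume s t :=
    hγ'.norm.intervalIntegrable_of_Icc hst.le
  obtain ⟨u, hu, hmean⟩ := exists_eq_interval_average (f := fun τ => ‖γ' τ‖) hst.ne
    (by rw [uIcc_of_le hst.le]; exact hγ'.norm)
  rw [interval_average_eq_div] at hmean
  rw [uIoo_of_le hst.le] at hu
  have hu_le : ‖γ' u‖ ≤ ∫ τ in s..t, ‖γ' τ‖ := by
    rw [hmean]
    exact div_le_self (intervalIntegral.integral_nonneg hst.le fun τ _ => norm_nonneg _) hT
  have hyoung := mul_integral_le_integral_sq_add hst.le hspeed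
    ((hγ'.norm.pow 2).intervalIntegrable_of_Icc hst.le) (1 + C₂ * maxW W s t)
  linarith [norm_le_of_eulerLagrange (Ioo_subset_Icc_self hu) hW hF₁ hF₂ hspeed
    (hEL u (Ioo_subset_Icc_self hu))]

end Action

lemma velocity_bound_le_mul_one_add_sq_add_sq {T X M D b C₀ C₁ C₂ : ℝ} (hT : 1 ≤ T)
    (hM : 0 ≤ M) (hD₀ : 0 ≤ D) (hD : D ≤ X + b) (hb : 0 ≤ b) (hC₀ : 0 ≤ C₀) (hC₁ : 0 ≤ C₁) :
    D ^ 2 / (2 * T) + C₁ * M * D + 2 * C₀ * M + C₁ ^ 2 * M ^ 2 * T + (1 + C₂ * M) ^ 2 * T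
      + C₁ * M ≤ (3 + b ^ 2 + C₀ + C₁ * (2 + b) + C₁ ^ 2 + 2 * C₂ ^ 2) * T * (1 + X ^ 2 + M ^ 2) := by
  set Q := 1 + X ^ 2 + M ^ 2 with hQ
  have hX2 : X ^ 2 ≤ Q := by nlinarith
  have hM2 : M ^ 2 ≤ Q := by nlinarith
  have h2M : 2 * M ≤ Q := by nlinarith [sq_nonneg (M - 1)]
  have hTQ : Q ≤ T * Q := le_mul_of_one_le_left (by nlinarith) hT
  have kinetic : D ^ 2 / (2 * T) ≤ (1 + b ^ 2) * (T * Q) := by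
    rw [div_le_iff₀ (by positivity)]
    nlinarith [sq_nonneg (X - b), mul_le_mul_of_nonneg_left hTQ (by positivity : (0:ℝ) ≤ 1 + b ^ 2)]
  have cross : C₁ * M * D ≤ C₁ * (1 + b) * (T * Q) := by
    have : M * D ≤ (1 + b) * Q := by nlinarith [sq_nonneg (M - X), sq_nonneg (M - 1)]
    nlinarith [mul_le_mul_of_nonneg_left hTQ (by positivity : (0:ℝ) ≤ C₁ * (1 + b))]
  have boundary : 2 * C₀ * M ≤ C₀ * (T * Q) := by nlinarith
  have drift : C₁ * M ≤ C₁ * (T * Q) := by nlinarith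
  have potential : C₁ ^ 2 * M ^ 2 * T ≤ C₁ ^ 2 * (T * Q) := by
    nlinarith [mul_le_mul_of_nonneg_left hM2 (by positivity : (0:ℝ) ≤ C₁ ^ 2 * T)]
  have force : (1 + C₂ * M) ^ 2 * T ≤ (2 + 2 * C₂ ^ 2) * (T * Q) := by
    have : (1 + C₂ * M) ^ 2 ≤ (2 + 2 * C₂ ^ 2) * Q := by
      nlinarith [sq_nonneg (C₂ * M - 1), sq_nonneg C₂, sq_nonneg X]
    nlinarith
  linear_combination kinetic + cross + boundary + drift + potential + force
theorem minimizer_endpoint_velocity_bound_nonperiodic_general (b C₀ C₁ C₂ : ℝ) :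
    ∃ c : ℝ, 0 < c ∧
      ∀ (d : ℕ), 1 ≤ d →
      ∀ F : EuclideanSpace ℝ (Fin d) → ℝ, ContDiff ℝ 2 F →
        (∀ x, |F x| ≤ C₀) → (∀ x, ‖gradient F x‖ ≤ C₁) →
        (∀ x, ‖fderiv ℝ (gradient F) x‖ ≤ C₂) →
      ∀ W : ℝ → ℝ, Continuous W →
      ∀ s t : ℝ, s < t → 1 ≤ t - s →
      ∀ x : EuclideanSpace ℝ (Fin d),
      ∀ γ γ' : ℝ → EuclideanSpace ℝ (Fin d), IsACWith γ γ' s t →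
        ContinuousOn γ' (Set.Icc s t) →
        ‖γ s‖ ≤ b → γ t = x →
        -- `γ` minimizes the action among curves with the same endpoints
        (∀ σ σ' : ℝ → EuclideanSpace ℝ (Fin d), IsACWith σ σ' s t →
          σ s = γ s → σ t = γ t → actionW F W γ γ' s t ≤ actionW F W σ σ' s t) →
        -- the Euler–Lagrange identity
        (∀ u ∈ Set.Icc s t,
          γ' t = γ' u + (∫ τ in u..t, (W τ - W t) • fderiv ℝ (gradient F) (γ τ) (γ' τ))
            + (W u - W t) • gradient F (γ u)) →
        ‖γ' t‖ ≤ c * (t - s) * (1 + ‖x‖^2 + (maxW W s t)^2) := by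
  refine ⟨3 + b ^ 2 + |C₀| + |C₁| * (2 + |b|) + C₁ ^ 2 + 2 * C₂ ^ 2, by positivity, ?_⟩
  intro d _ F hF hF₀ hF₁ hF₂ W hW s t hst hT x γ γ' hAC hγ' hγs hγt hmin hEL
  have hb : 0 ≤ b := (norm_nonneg _).trans hγs
  have hC₀ : 0 ≤ C₀ := (abs_nonneg _).trans (hF₀ 0)
  have hC₁ : 0 ≤ C₁ := (norm_nonneg _).trans (hF₁ 0)
  have hgrad : Continuous (gradient F) := (hF.gradient (n := 1)).continuous
  have hvelocity := norm_le_energy_of_eulerLagrange hT hW.continuousOn hF₁ hF₂ hγ' hEL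
  have henergy := IsActionMinimizer.energy_le hmin hst hW.continuousOn hF₀ hF₁ hgrad
    (hAC.continuousOn hst.le) hγ'
  have hD : ‖γ t - γ s‖ ≤ ‖x‖ + b := hγt ▸ (norm_sub_le _ _).trans (by linarith)
  have hbound := velocity_bound_le_mul_one_add_sq_add_sq (C₂ := C₂) hT
    (maxW_nonneg hW.continuousOn hst.le) (norm_nonneg _) hD hb hC₀ hC₁
  rw [abs_of_nonneg hb, abs_of_nonneg hC₀, abs_of_nonneg hC₁]
  linarith

/-- Let `t - s ≥ 1` and let `γ : [s,t] → ℝ^d` be a continuously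
differentiable curve with `|γ(s)| ≤ b`, `γ(t) = x`, minimizing `A^W_{s,t}` among curves with
the same endpoints and satisfying the Euler–Lagrange identity
`γ̇(t) = γ̇(u) + ∫_u^t ∇²F(γ(τ)) γ̇(τ)(W(τ) - W(t)) dτ + ∇F(γ(u))(W(u) - W(t))` for
`u ∈ [s,t]`. Then `|γ̇(t)| ≤ c (t - s)(1 + |x|² + max_{s≤τ≤t} |W(τ) - W(t)|²)` for a
constant `c > 0` depending only on `b, C₀, C₁, C₂` (not on `x, s, t, W`). -/
theorem minimizer_endpoint_velocity_bound_nonperiodic (b C₀ C₁ C₂ : ℝ) (hb : 0 < b) :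
    ∃ c : ℝ, 0 < c ∧
      ∀ (d : ℕ), 1 ≤ d →
      ∀ F : EuclideanSpace ℝ (Fin d) → ℝ, ContDiff ℝ 2 F →
        (∀ x, |F x| ≤ C₀) → (∀ x, ‖gradient F x‖ ≤ C₁) →
        (∀ x, ‖fderiv ℝ (gradient F) x‖ ≤ C₂) →
      ∀ W : ℝ → ℝ, Continuous W →
      ∀ s t : ℝ, s < t → 1 ≤ t - s →
      ∀ x : EuclideanSpace ℝ (Fin d),
      ∀ γ γ' : ℝ → EuclideanSpace ℝ (Fin d), IsACWith γ γ' s t →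
        ContinuousOn γ' (Set.Icc s t) →
        ‖γ s‖ ≤ b → γ t = x →
        -- `γ` minimizes the action among curves with the same endpoints
        (∀ σ σ' : ℝ → EuclideanSpace ℝ (Fin d), IsACWith σ σ' s t →
          σ s = γ s → σ t = γ t → actionW F W γ γ' s t ≤ actionW F W σ σ' s t) →
        -- the Euler–Lagrange identity
        (∀ u ∈ Set.Icc s t,
          γ' t = γ' u + (∫ τ in u..t, (W τ - W t) • fderiv ℝ (gradient F) (γ τ) (γ' τ))
            + (W u - W t) • gradient F (γ u)) →
        ‖γ' t‖ ≤ c * (t - s) * (1 + ‖x‖^2 + (maxW W s t)^2) :=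
  minimizer_endpoint_velocity_bound_nonperiodic_general b C₀ C₁ C₂
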